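/- arXiv:2007.08571 — 3 statements merged into one kernel-verified Lean document; each statement's English description precedes it below -/
import Mathlib

section
/- Let M_ext be the new extended block matrix [[A_kk, 0, A_kp], [A_ck, A_cc, 0], [A_pk, 0, A_pp]]. Suppose A_cc is invertible and (σ_k, σ_p) satisfies the perturbed system A_nn (σ_k, σ_p) = (g_k, g_p). Then, setting σ_c := −A_cc⁻¹ · (A_ck · σ_k), the extended vector (σ_k, σ_c, σ_p) satisfies M_ext (σ_k, σ_c, σ_p) = (g_k, 0, g_p). Hence solving the extended system is equivalent to solving the perturbed system when A_cc is invertible. -/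
/-- If `A_cc` is invertible and `(σ_k, σ_p)` solves the perturbed system
`[[A_kk, A_kp], [A_pk, A_pp]] (σ_k, σ_p) = (g_k, g_p)`, then, setting
`σ_c := −A_cc⁻¹ ⬝ (A_ck ⬝ σ_k)`, the extended vector `(σ_k, σ_c, σ_p)` solves the
new extended system `[[A_kk, 0, A_kp], [A_ck, A_cc, 0], [A_pk, 0, A_pp]] σ = (g_k, 0, g_p)`. -/
theorem perturbed_solution_gives_new_extended_solution
    {K C P 𝕜 : Type*} [Fintype K] [Fintype C] [Fintype P]
    [DecidableEq K] [DecidableEq C] [DecidableEq P] [Field 𝕜]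
    (A_kk : Matrix K K 𝕜) (A_kp : Matrix K P 𝕜) (A_pk : Matrix P K 𝕜)
    (A_pp : Matrix P P 𝕜) (A_ck : Matrix C K 𝕜) (A_cc : Matrix C C 𝕜)
    (σk : K → 𝕜) (σp : P → 𝕜) (gk : K → 𝕜) (gp : P → 𝕜)
    (hcc : IsUnit A_cc)
    (h : (Matrix.fromBlocks A_kk A_kp A_pk A_pp).mulVec (Sum.elim σk σp)
          = Sum.elim gk gp) :
    (Matrix.fromBlocks
        (Matrix.fromBlocks A_kk 0 A_ck A_cc)
        (Matrix.of fun i j => Sum.elim (fun k => A_kp k j) (fun _ => (0 : 𝕜)) i)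
        (Matrix.of fun i j => Sum.elim (fun k => A_pk i k) (fun _ => (0 : 𝕜)) j)
        A_pp).mulVec
        (Sum.elim (Sum.elim σk (-(A_cc⁻¹.mulVec (A_ck.mulVec σk)))) σp)
      = Sum.elim (Sum.elim gk 0) gp := by
  have hk : ∀ k, A_kk.mulVec σk k + A_kp.mulVec σp k = gk k := fun k => by
    simpa [Matrix.fromBlocks_mulVec] using congrFun h (Sum.inl k)
  have hp : ∀ p, A_pk.mulVec σk p + A_pp.mulVec σp p = gp p := fun p => by
    simpa [Matrix.fromBlocks_mulVec] using congrFun h (Sum.inr p)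
  have hinv : A_cc.mulVec (A_cc⁻¹.mulVec (A_ck.mulVec σk)) = A_ck.mulVec σk := by
    rw [Matrix.mulVec_mulVec,
      Matrix.mul_nonsing_inv _ ((Matrix.isUnit_iff_isUnit_det _).mp hcc),
      Matrix.one_mulVec]
  funext x
  rcases x with (k | c) | p
  · simpa [Matrix.fromBlocks, Matrix.mulVec, dotProduct,
      Fintype.sum_sum_type] using hk k
  · have := congrFun hinv c
    simp [Matrix.fromBlocks, Matrix.mulVec, dotProduct,
      Fintype.sum_sum_type, mul_neg, -Matrix.mulVec_mulVec] at this ⊢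
    linear_combination -this
  · simpa [Matrix.fromBlocks, Matrix.mulVec, dotProduct,
      Fintype.sum_sum_type] using hp p
end

section
/- Suppose both the perturbed system matrix A_nn = [[A_kk, A_kp], [A_pk, A_pp]] and the block A_cc are invertible, and let (σ_k, σ_p) := A_nn⁻¹ (g_k, g_p). Then the unique solution of the new extended system M_ext x = (g_k, 0, g_p) is x = (σ_k, −A_cc⁻¹ · (A_ck · σ_k), σ_p); in particular the K- and P-components of M_ext⁻¹ (g_k, 0, g_p) coincide with the components of A_nn⁻¹ (g_k, g_p). -/
/-- Suppose `A_nn = [[A_kk, A_kp], [A_pk, A_pp]]` and `A_cc` are invertible, and let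
`(σ_k, σ_p) := A_nn⁻¹ (g_k, g_p)`.  Then the unique solution of the new extended system
`M_ext x = (g_k, 0, g_p)` is `x = (σ_k, −A_cc⁻¹ (A_ck σ_k), σ_p)`; in particular the `K`-
and `P`-components of `M_ext⁻¹ (g_k, 0, g_p)` coincide with those of `A_nn⁻¹ (g_k, g_p)`. -/
theorem new_extended_unique_solution
    {K C P 𝕜 : Type*} [Fintype K] [Fintype C] [Fintype P]
    [DecidableEq K] [DecidableEq C] [DecidableEq P] [Field 𝕜]
    (A_kk : Matrix K K 𝕜) (A_kp : Matrix K P 𝕜) (A_pk : Matrix P K 𝕜)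
    (A_pp : Matrix P P 𝕜) (A_ck : Matrix C K 𝕜) (A_cc : Matrix C C 𝕜)
    (gk : K → 𝕜) (gp : P → 𝕜)
    (hnn : IsUnit (Matrix.fromBlocks A_kk A_kp A_pk A_pp))
    (hcc : IsUnit A_cc) :
    (∀ y : (K ⊕ C) ⊕ P → 𝕜,
        (Matrix.fromBlocks
            (Matrix.fromBlocks A_kk 0 A_ck A_cc)
            (Matrix.of fun i j => Sum.elim (fun k => A_kp k j) (fun _ => (0 : 𝕜)) i)
            (Matrix.of fun i j => Sum.elim (fun k => A_pk i k) (fun _ => (0 : 𝕜)) j)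
            A_pp).mulVec y = Sum.elim (Sum.elim gk 0) gp
          ↔ y = Sum.elim
              (Sum.elim
                (fun i => (Matrix.fromBlocks A_kk A_kp A_pk A_pp)⁻¹.mulVec
                    (Sum.elim gk gp) (Sum.inl i))
                (-(A_cc⁻¹.mulVec (A_ck.mulVec
                    (fun i => (Matrix.fromBlocks A_kk A_kp A_pk A_pp)⁻¹.mulVec
                      (Sum.elim gk gp) (Sum.inl i))))))
              (fun j => (Matrix.fromBlocks A_kk A_kp A_pk A_pp)⁻¹.mulVec
                  (Sum.elim gk gp) (Sum.inr j)))
      ∧ (∀ i : K,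
          (Matrix.fromBlocks
              (Matrix.fromBlocks A_kk 0 A_ck A_cc)
              (Matrix.of fun i j => Sum.elim (fun k => A_kp k j) (fun _ => (0 : 𝕜)) i)
              (Matrix.of fun i j => Sum.elim (fun k => A_pk i k) (fun _ => (0 : 𝕜)) j)
              A_pp)⁻¹.mulVec (Sum.elim (Sum.elim gk 0) gp) (Sum.inl (Sum.inl i))
            = (Matrix.fromBlocks A_kk A_kp A_pk A_pp)⁻¹.mulVec
                (Sum.elim gk gp) (Sum.inl i))
      ∧ (∀ j : P,
          (Matrix.fromBlocks
              (Matrix.fromBlocks A_kk 0 A_ck A_cc)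
              (Matrix.of fun i j => Sum.elim (fun k => A_kp k j) (fun _ => (0 : 𝕜)) i)
              (Matrix.of fun i j => Sum.elim (fun k => A_pk i k) (fun _ => (0 : 𝕜)) j)
              A_pp)⁻¹.mulVec (Sum.elim (Sum.elim gk 0) gp) (Sum.inr j)
            = (Matrix.fromBlocks A_kk A_kp A_pk A_pp)⁻¹.mulVec
                (Sum.elim gk gp) (Sum.inr j)) := by
  have hdet : IsUnit (Matrix.fromBlocks A_kk A_kp A_pk A_pp).det :=
    (Matrix.isUnit_iff_isUnit_det _).mp hnn
  have hccdet : IsUnit A_cc.det := (Matrix.isUnit_iff_isUnit_det _).mp hcc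
  set Ann := Matrix.fromBlocks A_kk A_kp A_pk A_pp with hAnn
  set M := Matrix.fromBlocks
      (Matrix.fromBlocks A_kk 0 A_ck A_cc)
      (Matrix.of fun i j => Sum.elim (fun k => A_kp k j) (fun _ => (0 : 𝕜)) i)
      (Matrix.of fun i j => Sum.elim (fun k => A_pk i k) (fun _ => (0 : 𝕜)) j)
      A_pp with hMdef
  set σ := Ann⁻¹.mulVec (Sum.elim gk gp) with hσ
  set σk : K → 𝕜 := fun i => σ (Sum.inl i) with hσkdef
  set σp : P → 𝕜 := fun j => σ (Sum.inr j) with hσpdef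
  set σc : C → 𝕜 := -(A_cc⁻¹.mulVec (A_ck.mulVec σk)) with hσcdef
  set x₀ : (K ⊕ C) ⊕ P → 𝕜 := Sum.elim (Sum.elim σk σc) σp with hx₀
  have hσsplit : σ = Sum.elim σk σp := by funext s; cases s <;> rfl
  have hσeq : Ann.mulVec (Sum.elim σk σp) = Sum.elim gk gp := by
    rw [← hσsplit, hσ, Matrix.mulVec_mulVec, Matrix.mul_nonsing_inv _ hdet,
      Matrix.one_mulVec]
  have hK : A_kk.mulVec σk + A_kp.mulVec σp = gk := by
    funext k
    simpa [hAnn, Matrix.fromBlocks_mulVec] using congrFun hσeq (Sum.inl k)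
  have hP : A_pk.mulVec σk + A_pp.mulVec σp = gp := by
    funext p
    simpa [hAnn, Matrix.fromBlocks_mulVec] using congrFun hσeq (Sum.inr p)
  have hC : A_ck.mulVec σk + A_cc.mulVec σc = 0 := by
    rw [hσcdef, Matrix.mulVec_neg, Matrix.mulVec_mulVec,
      Matrix.mul_nonsing_inv _ hccdet, Matrix.one_mulVec, add_neg_cancel]
  have hsolve : M.mulVec x₀ = Sum.elim (Sum.elim gk 0) gp := by
    funext s
    rcases s with (k | c) | p
    · have := congrFun hK k
      simp only [Matrix.mulVec, dotProduct, Pi.add_apply] at this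
      simpa [hMdef, hx₀, Matrix.mulVec, dotProduct, Matrix.fromBlocks,
        Fintype.sum_sum_type] using this
    · have := congrFun hC c
      simp only [Matrix.mulVec, dotProduct, Pi.add_apply, Pi.zero_apply] at this
      simpa [hMdef, hx₀, Matrix.mulVec, dotProduct, Matrix.fromBlocks,
        Fintype.sum_sum_type] using this
    · have := congrFun hP p
      simp only [Matrix.mulVec, dotProduct, Pi.add_apply] at this
      simpa [hMdef, hx₀, Matrix.mulVec, dotProduct, Matrix.fromBlocks,
        Fintype.sum_sum_type] using this
  have hker : ∀ d : (K ⊕ C) ⊕ P → 𝕜, M.mulVec d = 0 → d = 0 := by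
    intro d hd
    set dk : K → 𝕜 := fun k => d (Sum.inl (Sum.inl k)) with hdk
    set dc : C → 𝕜 := fun c => d (Sum.inl (Sum.inr c)) with hdc
    set dp : P → 𝕜 := fun p => d (Sum.inr p) with hdp
    have hKd : (A_kk.mulVec dk + A_kp.mulVec dp) = 0 := by
      funext k
      have := congrFun hd (Sum.inl (Sum.inl k))
      simp only [hMdef, Matrix.mulVec, dotProduct, Matrix.fromBlocks,
        Fintype.sum_sum_type, Pi.zero_apply, Matrix.of_apply, Sum.elim_inl,
        Sum.elim_inr, zero_mul, Finset.sum_const_zero, add_zero, zero_add] at this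
      simpa [Matrix.mulVec, dotProduct, hdk, hdp] using this
    have hPd : (A_pk.mulVec dk + A_pp.mulVec dp) = 0 := by
      funext p
      have := congrFun hd (Sum.inr p)
      simp only [hMdef, Matrix.mulVec, dotProduct, Matrix.fromBlocks,
        Fintype.sum_sum_type, Pi.zero_apply, Matrix.of_apply, Sum.elim_inl,
        Sum.elim_inr, zero_mul, Finset.sum_const_zero, add_zero, zero_add] at this
      simpa [Matrix.mulVec, dotProduct, hdk, hdp] using this
    have hnn0 : Ann.mulVec (Sum.elim dk dp) = 0 := by
      funext s
      rcases s with k | p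
      · simpa [hAnn, Matrix.fromBlocks_mulVec] using congrFun hKd k
      · simpa [hAnn, Matrix.fromBlocks_mulVec] using congrFun hPd p
    have hdkp : Sum.elim dk dp = 0 := by
      apply Matrix.mulVec_injective_iff_isUnit.mpr hnn
      rw [hnn0, Matrix.mulVec_zero]
    have hdk0 : dk = 0 := by funext k; exact congrFun hdkp (Sum.inl k)
    have hdp0 : dp = 0 := by funext p; exact congrFun hdkp (Sum.inr p)
    have hCd : A_cc.mulVec dc = 0 := by
      funext c
      have := congrFun hd (Sum.inl (Sum.inr c))
      simp only [hMdef, Matrix.mulVec, dotProduct, Matrix.fromBlocks,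
        Fintype.sum_sum_type, Pi.zero_apply, Matrix.of_apply, Sum.elim_inl,
        Sum.elim_inr, zero_mul, Finset.sum_const_zero, add_zero, zero_add] at this
      have hdkz : ∀ k, d (Sum.inl (Sum.inl k)) = 0 := fun k => congrFun hdk0 k
      simp only [hdkz, mul_zero, Finset.sum_const_zero, zero_add] at this
      simpa [Matrix.mulVec, dotProduct, hdc] using this
    have hdc0 : dc = 0 := by
      apply Matrix.mulVec_injective_iff_isUnit.mpr hcc
      rw [hCd, Matrix.mulVec_zero]
    funext s
    rcases s with (k | c) | p
    · exact congrFun hdk0 k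
    · exact congrFun hdc0 c
    · exact congrFun hdp0 p
  have hinj : Function.Injective M.mulVec := by
    intro y z h
    have := hker (y - z) (by rw [Matrix.mulVec_sub, h, sub_self])
    exact sub_eq_zero.mp this
  have hMunit : IsUnit M := Matrix.mulVec_injective_iff_isUnit.mp hinj
  have hMinv : M⁻¹.mulVec (Sum.elim (Sum.elim gk 0) gp) = x₀ := by
    rw [← hsolve, Matrix.mulVec_mulVec,
      Matrix.nonsing_inv_mul _ ((Matrix.isUnit_iff_isUnit_det _).mp hMunit),
      Matrix.one_mulVec]
  refine ⟨fun y => ⟨fun hy => hinj (hy.trans hsolve.symm), fun hy => hy ▸ hsolve⟩,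
    fun i => congrFun hMinv (Sum.inl (Sum.inl i)),
    fun j => congrFun hMinv (Sum.inr j)⟩
end

section
/- Let B_cc be the matrix A_cc with its diagonal entries set to zero, i.e. B_cc i j = A_cc i j for i ≠ j and B_cc i i = 0, and let D_cc := A_cc − B_cc be the diagonal part of A_cc. Then the original extended matrix Ã + Q_orig equals the 3×3 block matrix [[A_kk, 0, A_kp], [A_ck, D_cc, A_cp], [A_pk, 0, A_pp]] on index set K ⊕ C ⊕ P, where Ã is block diagonal with blocks A_oo = [[A_kk, A_kc], [A_ck, A_cc]] and A_pp, and Q_orig has block rows [0, −A_kc, A_kp], [0, −B_cc, A_cp], [A_pk, 0, 0]. Moreover, any solution (σ_k, σ_c, σ_p) of (Ã + Q_orig)(σ_k, σ_c, σ_p) = (g_k, 0, g_p) satisfies the perturbed system A_nn (σ_k, σ_p) = (g_k, g_p), where A_nn = [[A_kk, A_kp], [A_pk, A_pp]]. -/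
/-- Let `B_cc` be `A_cc` with its diagonal entries set to zero and `D_cc := A_cc − B_cc`.
Then `Ã + Q_orig = [[A_kk, 0, A_kp], [A_ck, D_cc, A_cp], [A_pk, 0, A_pp]]`, where
`Ã = diag([[A_kk, A_kc], [A_ck, A_cc]], A_pp)` and
`Q_orig = [[0, −A_kc, A_kp], [0, −B_cc, A_cp], [A_pk, 0, 0]]`; moreover any solution
`(σ_k, σ_c, σ_p)` of `(Ã + Q_orig) σ = (g_k, 0, g_p)` satisfies the perturbed system
`[[A_kk, A_kp], [A_pk, A_pp]] (σ_k, σ_p) = (g_k, g_p)`. -/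
theorem orig_extended_decomposition_and_solution
    {K C P 𝕜 : Type*} [Fintype K] [Fintype C] [Fintype P]
    [DecidableEq K] [DecidableEq C] [DecidableEq P] [Field 𝕜]
    (A_kk : Matrix K K 𝕜) (A_kc : Matrix K C 𝕜) (A_kp : Matrix K P 𝕜)
    (A_ck : Matrix C K 𝕜) (A_cc : Matrix C C 𝕜) (A_cp : Matrix C P 𝕜)
    (A_pk : Matrix P K 𝕜) (A_pp : Matrix P P 𝕜)
    (gk : K → 𝕜) (gp : P → 𝕜)
    (B_cc : Matrix C C 𝕜)
    (hB : ∀ i j : C, B_cc i j = if i = j then 0 else A_cc i j) :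
    ((Matrix.fromBlocks (Matrix.fromBlocks A_kk A_kc A_ck A_cc) 0 0 A_pp)
        + (Matrix.fromBlocks
            (Matrix.fromBlocks 0 (-A_kc) 0 (-B_cc))
            (Matrix.of fun i j => Sum.elim (fun k => A_kp k j) (fun c => A_cp c j) i)
            (Matrix.of fun i j => Sum.elim (fun k => A_pk i k) (fun _ => (0 : 𝕜)) j)
            0)
      = Matrix.fromBlocks
          (Matrix.fromBlocks A_kk 0 A_ck (A_cc - B_cc))
          (Matrix.of fun i j => Sum.elim (fun k => A_kp k j) (fun c => A_cp c j) i)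
          (Matrix.of fun i j => Sum.elim (fun k => A_pk i k) (fun _ => (0 : 𝕜)) j)
          A_pp)
    ∧ (∀ (σk : K → 𝕜) (σc : C → 𝕜) (σp : P → 𝕜),
        ((Matrix.fromBlocks (Matrix.fromBlocks A_kk A_kc A_ck A_cc) 0 0 A_pp)
            + (Matrix.fromBlocks
                (Matrix.fromBlocks 0 (-A_kc) 0 (-B_cc))
                (Matrix.of fun i j => Sum.elim (fun k => A_kp k j) (fun c => A_cp c j) i)
                (Matrix.of fun i j => Sum.elim (fun k => A_pk i k) (fun _ => (0 : 𝕜)) j)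
                0)).mulVec (Sum.elim (Sum.elim σk σc) σp)
          = Sum.elim (Sum.elim gk 0) gp →
        (Matrix.fromBlocks A_kk A_kp A_pk A_pp).mulVec (Sum.elim σk σp)
          = Sum.elim gk gp) := by
  constructor
  · ext i j
    rcases i with (k | c) | p <;> rcases j with (k' | c') | p' <;>
      simp [Matrix.fromBlocks, Matrix.add_apply, hB, sub_eq_add_neg]
  · intro σk σc σp h
    funext x
    cases x with
    | inl k =>
      have := congrFun h (Sum.inl (Sum.inl k))
      simpa [Matrix.mulVec, dotProduct, Fintype.sum_sum_type,
        Matrix.fromBlocks, add_assoc] using this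
    | inr p =>
      have := congrFun h (Sum.inr p)
      simpa [Matrix.mulVec, dotProduct, Fintype.sum_sum_type,
        Matrix.fromBlocks, add_assoc] using this
end
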